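/- arXiv:2509.18596 — 4 statements merged into one kernel-verified Lean document; each statement's English description precedes it below -/
import Mathlib

section
/- Let X be a complex Banach space, η ∈ (0,1), and let L = P + N be a (1,η)-gap decomposition of a bounded linear operator L on X. Then for every z ∈ ℂ with |z| > η and z ≠ 1, the operators z·I − N and z·I − L are invertible, and (z·I − L)⁻¹ = (z − 1)⁻¹ · P + (z·I − N)⁻¹ ∘ (I − P). -/
/-! Since `N P = 0`, one has `zI - L = (z - 1) P + (zI - N)(I - P)`, and `P` commutes with
`zI - N`. With respect to the complementary idempotents `P` and `I - P` this operator is block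
diagonal, so it is inverted blockwise; the block `zI - N` is invertible because `|z|` exceeds the
spectral radius of `N`. -/

open ContinuousLinearMap

namespace IsIdempotentElem

variable {𝕜 A : Type*} [Ring A] {p : A}

theorem smul_add_mul_one_sub_mul_smul_add_mul_one_sub [CommRing 𝕜] [Algebra 𝕜 A]
    (hp : IsIdempotentElem p) (c c' : 𝕜) (b : A) {b' : A} (hpb' : Commute p b') :
    (c • p + b * (1 - p)) * (c' • p + b' * (1 - p)) = (c * c') • p + (b * b') * (1 - p) := by
  have hqb' : Commute (1 - p) b' := (Commute.one_left b').sub_left hpb'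
  have hpb'q : p * (b' * (1 - p)) = 0 := by
    rw [← mul_assoc, hpb'.eq, mul_assoc, hp.mul_one_sub_self, mul_zero]
  have hqb'q : (1 - p) * (b' * (1 - p)) = b' * (1 - p) := by
    rw [← mul_assoc, hqb'.eq, mul_assoc, hp.one_sub.eq]
  simp only [add_mul, mul_add, hp.eq, smul_mul_assoc, mul_smul_comm, mul_assoc, hpb'q,
    hp.one_sub_mul_self, hqb'q, smul_zero, mul_zero, add_zero, zero_add]
  rw [smul_smul, mul_comm c']

theorem isUnit_and_ringInverse_smul_add_mul_one_sub [Field 𝕜] [Algebra 𝕜 A]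
    (hp : IsIdempotentElem p) {c : 𝕜} (hc : c ≠ 0) {b : A} (hb : IsUnit b) (hpb : Commute p b) :
    IsUnit (c • p + b * (1 - p)) ∧
      Ring.inverse (c • p + b * (1 - p)) = c⁻¹ • p + Ring.inverse b * (1 - p) := by
  have hpb_inv : Commute p (Ring.inverse b) := by
    rw [Ring.inverse_of_isUnit hb]
    exact hpb.units_inv_right (u := hb.unit)
  let u : Aˣ :=
    { val := c • p + b * (1 - p)
      inv := c⁻¹ • p + Ring.inverse b * (1 - p)
      val_inv := by
        rw [hp.smul_add_mul_one_sub_mul_smul_add_mul_one_sub _ _ _ hpb_inv,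
          mul_inv_cancel₀ hc, Ring.mul_inverse_cancel b hb, one_smul, one_mul, add_sub_cancel]
      inv_val := by
        rw [hp.smul_add_mul_one_sub_mul_smul_add_mul_one_sub _ _ _ hpb,
          inv_mul_cancel₀ hc, Ring.inverse_mul_cancel b hb, one_smul, one_mul, add_sub_cancel] }
  exact ⟨u.isUnit, Ring.inverse_unit u⟩

end IsIdempotentElem

theorem algebraMap_sub_add_eq_smul_add_mul_one_sub {𝕜 A : Type*} [CommRing 𝕜] [Ring A]
    [Algebra 𝕜 A] (z : 𝕜) {p n : A} (hnp : n * p = 0) :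
    algebraMap 𝕜 A z - (p + n) = (z - 1) • p + (algebraMap 𝕜 A z - n) * (1 - p) := by
  simp only [Algebra.algebraMap_eq_smul_one, sub_mul, mul_sub, hnp, smul_mul_assoc, one_mul,
    mul_one, sub_smul, one_smul, sub_zero]
  abel

theorem stmt1_general {X : Type*} [NormedAddCommGroup X] [NormedSpace ℂ X]
    (η : ℝ) (hη : η ∈ Set.Ioo (0 : ℝ) 1) (L P N : X →L[ℂ] X)
    (hPP : P * P = P) (hPN : P * N = 0) (hNP : N * P = 0) (hLPN : L = P + N)
    (hr : spectralRadius ℂ N ≤ ENNReal.ofReal η) :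
    ∀ z : ℂ, η < ‖z‖ → z ≠ 1 →
      IsUnit (algebraMap ℂ (X →L[ℂ] X) z - N) ∧
      IsUnit (algebraMap ℂ (X →L[ℂ] X) z - L) ∧
      Ring.inverse (algebraMap ℂ (X →L[ℂ] X) z - L) =
        (z - 1)⁻¹ • P + Ring.inverse (algebraMap ℂ (X →L[ℂ] X) z - N) * (1 - P) := by
  intro z hz hz1
  have hN_lt : spectralRadius ℂ N < ‖z‖₊ := by
    refine hr.trans_lt ?_
    rw [← ENNReal.ofReal_coe_nnreal, coe_nnnorm, ENNReal.ofReal_lt_ofReal_iff']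
    exact ⟨hz, hη.1.trans hz⟩
  have hB : IsUnit (algebraMap ℂ (X →L[ℂ] X) z - N) :=
    spectrum.mem_resolventSet_of_spectralRadius_lt hN_lt
  have hPB : Commute P (algebraMap ℂ (X →L[ℂ] X) z - N) :=
    (Algebra.commute_algebraMap_right z P).sub_right (hPN.trans hNP.symm)
  rw [hLPN, algebraMap_sub_add_eq_smul_add_mul_one_sub z hNP]
  exact ⟨hB, IsIdempotentElem.isUnit_and_ringInverse_smul_add_mul_one_sub hPP
    (sub_ne_zero.mpr hz1) hB hPB⟩

/-- if `L = P + N` is a `(1,η)`-gap decomposition of a bounded operator `L`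
on a complex Banach space, then for every `z` with `|z| > η` and `z ≠ 1` the operators
`zI - N` and `zI - L` are invertible and
`(zI - L)⁻¹ = (z-1)⁻¹ • P + (zI - N)⁻¹ ∘ (I - P)`. -/
theorem stmt1 {X : Type*} [NormedAddCommGroup X] [NormedSpace ℂ X] [CompleteSpace X]
    (η : ℝ) (hη : η ∈ Set.Ioo (0 : ℝ) 1) (L P N : X →L[ℂ] X)
    (hPP : P * P = P) (hLP : L * P = P) (hPL : P * L = P)
    (hPN : P * N = 0) (hNP : N * P = 0) (hLPN : L = P + N)
    (hr : spectralRadius ℂ N ≤ ENNReal.ofReal η) :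
    ∀ z : ℂ, η < ‖z‖ → z ≠ 1 →
      IsUnit (algebraMap ℂ (X →L[ℂ] X) z - N) ∧
      IsUnit (algebraMap ℂ (X →L[ℂ] X) z - L) ∧
      Ring.inverse (algebraMap ℂ (X →L[ℂ] X) z - L) =
        (z - 1)⁻¹ • P + Ring.inverse (algebraMap ℂ (X →L[ℂ] X) z - N) * (1 - P) :=
  stmt1_general η hη L P N hPP hPN hNP hLPN hr
end

section
/- Let X be a complex Banach space, η ∈ (0,1), and let L = P + N be a (1,η)-gap decomposition of a bounded linear operator L on X. Then for every radius r ∈ (0, 1−η), every point of the circle |z − 1| = r lies in the resolvent set of L, and (2πi)⁻¹ ∮_{|z−1|=r} (z·I − L)⁻¹ dz = P. -/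
/-!
Because `P` and `N` annihilate each other, `z - L` acts as `z - 1` on the range of `P` and as
`z - N` on the range of `1 - P`, so `(z - L)⁻¹ = (z - 1)⁻¹ P + (z - N)⁻¹ (1 - P)` whenever `z ≠ 1`
and `z` is in the resolvent set of `N`; the bound `r < 1 - η` puts the whole closed disc
`|z - 1| ≤ r` in that resolvent set. The second term is then holomorphic on the disc and
integrates to zero by Cauchy's theorem, leaving `∮ (z - 1)⁻¹ dz • P = 2πi • P`.
-/

open Metric

section Ring

variable {A : Type*} [Ring A] {e c d : A}

theorem IsIdempotentElem.mul_add_mul_one_sub_mul (he : IsIdempotentElem e)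
    (hc : Commute e c) (hd : Commute e d) (a b : A) :
    (a * e + b * (1 - e)) * (c * e + d * (1 - e)) = a * c * e + b * d * (1 - e) := by
  have hd' : Commute (1 - e) d := (Commute.one_left d).sub_left hd
  have hee' : e * (1 - e) = 0 := by rw [mul_sub, mul_one, he.eq, sub_self]
  have he'e : (1 - e) * e = 0 := by rw [sub_mul, one_mul, he.eq, sub_self]
  calc (a * e + b * (1 - e)) * (c * e + d * (1 - e))
      = a * (e * e) * c + a * (e * (1 - e)) * d + b * ((1 - e) * e) * c
          + b * ((1 - e) * (1 - e)) * d := by rw [← hc.eq, ← hd'.eq]; noncomm_ring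
    _ = a * c * e + b * d * (1 - e) := by
        rw [he.eq, he.one_sub.eq, hee', he'e, mul_assoc a e c, hc.eq, mul_assoc b (1 - e) d,
          hd'.eq]
        noncomm_ring

end Ring

section Resolvent

variable {𝕜 A : Type*} [Field 𝕜] [Ring A] [Algebra 𝕜 A] {P N : A} {z : 𝕜}

theorem IsIdempotentElem.resolvent_add_of_mul_eq_zero (hP : IsIdempotentElem P)
    (hPN : P * N = 0) (hNP : N * P = 0) (hz : z ≠ 1) (hzN : z ∈ resolventSet 𝕜 N) :
    z ∈ resolventSet 𝕜 (P + N) ∧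
      resolvent (P + N) z = (z - 1)⁻¹ • P + resolvent N z * (1 - P) := by
  set B := algebraMap 𝕜 A z - N
  have hPB : Commute P B := (Algebra.commute_algebraMap_right z P).sub_right (hPN.trans hNP.symm)
  have hPB' : Commute P (resolvent N z) := by
    rw [spectrum.resolvent_eq hzN]; exact hPB.units_inv_right
  have hsplit : algebraMap 𝕜 A z - (P + N) = algebraMap 𝕜 A (z - 1) * P + B * (1 - P) := by
    simp only [B, map_sub, map_one, sub_mul, mul_sub, one_mul, mul_one, hNP]; abel
  have hR : (z - 1)⁻¹ • P + resolvent N z * (1 - P)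
      = algebraMap 𝕜 A (z - 1)⁻¹ * P + resolvent N z * (1 - P) := by rw [Algebra.smul_def]
  have hBR : B * resolvent N z = 1 := Ring.mul_inverse_cancel B hzN
  have hRB : resolvent N z * B = 1 := Ring.inverse_mul_cancel B hzN
  let u : Aˣ :=
    { val := algebraMap 𝕜 A z - (P + N)
      inv := (z - 1)⁻¹ • P + resolvent N z * (1 - P)
      val_inv := by
        rw [hsplit, hR, hP.mul_add_mul_one_sub_mul (Algebra.commute_algebraMap_right _ P) hPB',
          ← map_mul, mul_inv_cancel₀ (sub_ne_zero.2 hz), map_one, one_mul, hBR, one_mul,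
          add_sub_cancel]
      inv_val := by
        rw [hsplit, hR, hP.mul_add_mul_one_sub_mul (Algebra.commute_algebraMap_right _ P) hPB,
          ← map_mul, inv_mul_cancel₀ (sub_ne_zero.2 hz), map_one, one_mul, hRB, one_mul,
          add_sub_cancel] }
  exact ⟨u.isUnit, Ring.inverse_unit u⟩

end Resolvent

theorem closedBall_subset_resolventSet_of_spectralRadius_lt {𝕜 A : Type*} [NormedField 𝕜]
    [Ring A] [Algebra 𝕜 A] {a : A} {c : 𝕜} {r : ℝ}
    (h : spectralRadius 𝕜 a < ENNReal.ofReal (‖c‖ - r)) : closedBall c r ⊆ resolventSet 𝕜 a := by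
  intro z hz
  refine spectrum.mem_resolventSet_of_spectralRadius_lt (h.trans_le ?_)
  rw [← ENNReal.ofReal_coe_nnreal, coe_nnnorm]
  refine ENNReal.ofReal_le_ofReal ?_
  have := norm_sub_norm_le c z
  rw [norm_sub_rev] at this
  linarith [mem_closedBall_iff_norm.mp hz]

section Banach

variable {A : Type*} [NormedRing A] [NormedAlgebra ℂ A] [CompleteSpace A]

theorem differentiableOn_resolvent {a : A} {s : Set ℂ} (h : s ⊆ resolventSet ℂ a) :
    DifferentiableOn ℂ (resolvent a) s := fun _ hz =>
  (spectrum.hasDerivAt_resolvent_const_left (h hz)).differentiableAt.differentiableWithinAt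

theorem circleIntegral_resolvent_mul_eq_zero {a : A} {c : ℂ} {r : ℝ} (hr : 0 ≤ r)
    (h : closedBall c r ⊆ resolventSet ℂ a) (b : A) : ∮ z in C(c, r), resolvent a z * b = 0 := by
  have hd : DifferentiableOn ℂ (fun z => resolvent a z * b) (closedBall c r) :=
    (differentiableOn_resolvent h).mul_const b
  exact DiffContOnCl.circleIntegral_eq_zero hr
    ⟨hd.mono ball_subset_closedBall, hd.continuousOn.mono closure_ball_subset_closedBall⟩

theorem IsIdempotentElem.circleIntegral_resolvent_add {P N : A} (hP : IsIdempotentElem P)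
    (hPN : P * N = 0) (hNP : N * P = 0) {r : ℝ} (hr : 0 < r)
    (h : closedBall (1 : ℂ) r ⊆ resolventSet ℂ N) :
    (2 * Real.pi * Complex.I : ℂ)⁻¹ • (∮ z in C(1, r), resolvent (P + N) z) = P := by
  have hres : ∀ z ∈ sphere (1 : ℂ) r,
      resolvent (P + N) z = (z - 1)⁻¹ • P + resolvent N z * (1 - P) := fun z hz =>
    (hP.resolvent_add_of_mul_eq_zero hPN hNP (ne_of_mem_sphere hz hr.ne')
      (h (sphere_subset_closedBall hz))).2
  have hpole : CircleIntegrable (fun z => (z - 1)⁻¹ • P) 1 r :=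
    (circleIntegrable_sub_inv_iff.2 (Or.inr (by simp [abs_of_pos hr, hr.ne])))
      |>.fun_smul_continuousOn continuousOn_const
  have hhol : CircleIntegrable (fun z => resolvent N z * (1 - P)) 1 r :=
    (((differentiableOn_resolvent h).mul_const _).continuousOn.mono
      sphere_subset_closedBall).circleIntegrable hr.le
  rw [circleIntegral.integral_congr hr.le hres, circleIntegral.integral_add hpole hhol,
    circleIntegral_resolvent_mul_eq_zero hr.le h, add_zero, circleIntegral.integral_smul_const,
    circleIntegral.integral_sub_inv_of_mem_ball (mem_ball_self hr), smul_smul,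
    inv_mul_cancel₀ Complex.two_pi_I_ne_zero, one_smul]

end Banach

theorem stmt3_general {X : Type*} [NormedAddCommGroup X] [NormedSpace ℂ X] [CompleteSpace X]
    (η : ℝ) (hη : η ∈ Set.Ioo (0 : ℝ) 1) (L P N : X →L[ℂ] X)
    (hPP : P * P = P) (hPN : P * N = 0) (hNP : N * P = 0) (hLPN : L = P + N)
    (hr : spectralRadius ℂ N ≤ ENNReal.ofReal η) :
    ∀ r ∈ Set.Ioo (0 : ℝ) (1 - η),
      (∀ z : ℂ, ‖z - 1‖ = r → z ∈ resolventSet ℂ L) ∧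
      (2 * Real.pi * Complex.I : ℂ)⁻¹ •
          (∮ z in C(1, r), Ring.inverse (algebraMap ℂ (X →L[ℂ] X) z - L)) = P := by
  rintro r ⟨hr0, hr1⟩
  have hP : IsIdempotentElem P := hPP
  have hball : closedBall (1 : ℂ) r ⊆ resolventSet ℂ N :=
    closedBall_subset_resolventSet_of_spectralRadius_lt <| hr.trans_lt <| by
      rw [norm_one, ENNReal.ofReal_lt_ofReal_iff (by linarith [hη.1])]
      linarith
  subst hLPN
  refine ⟨fun z hz => ?_, hP.circleIntegral_resolvent_add hPN hNP hr0 hball⟩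
  have hzs : z ∈ sphere (1 : ℂ) r := mem_sphere_iff_norm.2 hz
  exact (hP.resolvent_add_of_mul_eq_zero hPN hNP (ne_of_mem_sphere hzs hr0.ne')
    (hball (sphere_subset_closedBall hzs))).1

/-- if `L = P + N` is a `(1,η)`-gap decomposition of a bounded operator `L`
on a complex Banach space, then for every radius `r ∈ (0, 1-η)` the circle `|z-1| = r`
lies in the resolvent set of `L` and `(2πi)⁻¹ ∮_{|z-1|=r} (zI - L)⁻¹ dz = P`. -/
theorem stmt3 {X : Type*} [NormedAddCommGroup X] [NormedSpace ℂ X] [CompleteSpace X]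
    (η : ℝ) (hη : η ∈ Set.Ioo (0 : ℝ) 1) (L P N : X →L[ℂ] X)
    (hPP : P * P = P) (hLP : L * P = P) (hPL : P * L = P)
    (hPN : P * N = 0) (hNP : N * P = 0) (hLPN : L = P + N)
    (hr : spectralRadius ℂ N ≤ ENNReal.ofReal η) :
    ∀ r ∈ Set.Ioo (0 : ℝ) (1 - η),
      (∀ z : ℂ, ‖z - 1‖ = r → z ∈ resolventSet ℂ L) ∧
      (2 * Real.pi * Complex.I : ℂ)⁻¹ •
          (∮ z in C(1, r), Ring.inverse (algebraMap ℂ (X →L[ℂ] X) z - L)) = P :=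
  stmt3_general η hη L P N hPP hPN hNP hLPN hr
end

section
/- In the nested one-parameter setting, fix t ∈ J and z on the circle γ. Then for every φ ∈ B₂, as s → t in J, the difference quotient (s − t)⁻¹ • (ι(R_s^{(2)}(z)φ) − ι(R_t^{(2)}(z)φ)) converges in B₀ to ι(R_t^{(1)}(z)(D_t(R_t^{(2)}(z)φ))), where ι denotes the composition of the embeddings into B₀. In other words, the strong derivative ∂_t R_t(z) exists as a bounded linear operator from B₂ to B₀ and equals R_t(z) ∘ (∂_t L_t) ∘ R_t(z). -/
open ContinuousLinearMap Filter Topology Metric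

/-- Resolvent operator `(z·I - A)⁻¹` (via `Ring.inverse`). -/
noncomputable def res {E : Type*} [NormedAddCommGroup E] [NormedSpace ℂ E]
    (z : ℂ) (A : E →L[ℂ] E) : E →L[ℂ] E :=
  Ring.inverse (algebraMap ℂ (E →L[ℂ] E) z - A)

section aux
variable {E F : Type*} [NormedAddCommGroup E] [NormedSpace ℂ E] [CompleteSpace E]
  [NormedAddCommGroup F] [NormedSpace ℂ F] [CompleteSpace F]

lemma commute_ring_inverse {R : Type*} [Ring R] {x m : R} (hm : IsUnit m) (h : Commute x m) :
    Commute x (Ring.inverse m) := by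
  obtain ⟨u, rfl⟩ := hm
  rw [Ring.inverse_unit]
  exact h.units_inv_right

lemma isUnit_sub_gap (z : ℂ) (η : ℝ) (hη : η ∈ Set.Ioo (0:ℝ) 1)
    (hz : z ∈ sphere (1 : ℂ) ((1 - η) / 2)) (L P N : E →L[ℂ] E)
    (h : P*P = P ∧ L*P = P ∧ P*L = P ∧ P*N = 0 ∧ N*P = 0 ∧ L = P + N ∧
      spectralRadius ℂ N ≤ ENNReal.ofReal η) :
    IsUnit (algebraMap ℂ (E →L[ℂ] E) z - L) := by
  obtain ⟨hPP, hLP, hPL, hPN, hNP, hLeq, hsr⟩ := h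
  have hznorm : ‖z - 1‖ = (1 - η) / 2 := by
    simpa [dist_eq_norm] using hz
  have hz1 : z ≠ 1 := by
    intro hzz
    rw [hzz] at hznorm
    simp at hznorm
    linarith [hη.2]
  have hzl : η < ‖z‖ := by
    have h1 : (1:ℝ) - ‖z‖ ≤ ‖z - 1‖ := by
      have := norm_sub_norm_le (1 : ℂ) z
      simpa [norm_sub_rev] using this
    rw [hznorm] at h1
    have := hη.1; have := hη.2
    linarith
  -- z - N is a unit
  have hM : IsUnit (algebraMap ℂ (E →L[ℂ] E) z - N) := by
    have : spectralRadius ℂ N < ‖z‖₊ := by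
      refine lt_of_le_of_lt hsr ?_
      rw [ENNReal.ofReal_lt_iff_lt_toReal (le_of_lt hη.1) (by simp)]
      simpa using hzl
    exact spectrum.mem_resolventSet_iff.mp (spectrum.mem_resolventSet_of_spectralRadius_lt this)
  set M : E →L[ℂ] E := algebraMap ℂ (E →L[ℂ] E) z - N with hMdef
  set S : E →L[ℂ] E := Ring.inverse M with hSdef
  set Q : E →L[ℂ] E := 1 - P with hQdef
  have hPQ : P * Q = 0 := by simp [hQdef, mul_sub, hPP]
  have hQP : Q * P = 0 := by simp [hQdef, sub_mul, hPP]
  have hQQ : Q * Q = Q := by simp [hQdef, mul_sub, sub_mul, hPP]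
  have hPM : Commute P M := by
    unfold Commute SemiconjBy
    simp [hMdef, mul_sub, sub_mul, hPN, hNP, Algebra.commutes]
  have hPS : Commute P S := commute_ring_inverse hM hPM
  have hQS : Commute Q S := by
    unfold Commute SemiconjBy
    simp [hQdef, mul_sub, sub_mul, hPS.eq]
  have hQM : Commute Q M := by
    unfold Commute SemiconjBy
    simp [hQdef, mul_sub, sub_mul, hPM.eq]
  have hMS : M * S = 1 := Ring.mul_inverse_cancel M hM
  have hSM : S * M = 1 := Ring.inverse_mul_cancel M hM
  have hA : algebraMap ℂ (E →L[ℂ] E) z - L = (z - 1) • P + M * Q := by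
    rw [hLeq, hQdef, hMdef]
    rw [sub_smul, one_smul, mul_sub, mul_one, sub_mul]
    have hzP : algebraMap ℂ (E →L[ℂ] E) z * P = z • P := by
      rw [Algebra.algebraMap_eq_smul_one, smul_mul_assoc, one_mul]
    rw [hzP]
    abel_nf
    rw [hNP]
    abel
  -- verify the two-sided inverse
  set R0 : E →L[ℂ] E := (z - 1)⁻¹ • P + S * Q with hRdef
  have hmul1 : (algebraMap ℂ (E →L[ℂ] E) z - L) * R0 = 1 := by
    rw [hA, hRdef]
    rw [add_mul, mul_add, mul_add, smul_mul_assoc, smul_mul_assoc,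
      mul_smul_comm, mul_smul_comm, smul_smul]
    have e1 : (z - 1) * (z - 1)⁻¹ = 1 := mul_inv_cancel₀ (sub_ne_zero.mpr hz1)
    have e2 : P * (S * Q) = 0 := by rw [← mul_assoc, hPS.eq, mul_assoc, hPQ, mul_zero]
    have e3 : M * Q * P = 0 := by rw [mul_assoc, hQP, mul_zero]
    have e4 : M * Q * (S * Q) = Q := by
      rw [mul_assoc, ← mul_assoc Q, hQS.eq, mul_assoc, hQQ, ← mul_assoc, hMS, one_mul]
    rw [e1, e2, e3, e4, one_smul, hPP, smul_zero, smul_zero]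
    simp [hQdef]
  have hmul2 : R0 * (algebraMap ℂ (E →L[ℂ] E) z - L) = 1 := by
    rw [hA, hRdef]
    rw [add_mul, mul_add, mul_add, smul_mul_assoc, smul_mul_assoc,
      mul_smul_comm, mul_smul_comm, smul_smul]
    have e1 : (z - 1)⁻¹ * (z - 1) = 1 := inv_mul_cancel₀ (sub_ne_zero.mpr hz1)
    have e2 : P * (M * Q) = 0 := by rw [← mul_assoc, hPM.eq, mul_assoc, hPQ, mul_zero]
    have e3 : S * Q * P = 0 := by rw [mul_assoc, hQP, mul_zero]
    have e4 : S * Q * (M * Q) = Q := by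
      rw [mul_assoc, ← mul_assoc Q, hQM.eq, mul_assoc, hQQ, ← mul_assoc, hSM, one_mul]
    rw [e1, e2, e3, e4, one_smul, hPP, smul_zero, smul_zero]
    simp [hQdef]
  exact ⟨⟨_, R0, hmul1, hmul2⟩, rfl⟩

lemma res_mul_cancel {z : ℂ} {A : E →L[ℂ] E}
    (h : IsUnit (algebraMap ℂ (E →L[ℂ] E) z - A)) :
    res z A * (algebraMap ℂ (E →L[ℂ] E) z - A) = 1 :=
  Ring.inverse_mul_cancel _ h

lemma mul_res_cancel {z : ℂ} {A : E →L[ℂ] E}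
    (h : IsUnit (algebraMap ℂ (E →L[ℂ] E) z - A)) :
    (algebraMap ℂ (E →L[ℂ] E) z - A) * res z A = 1 :=
  Ring.mul_inverse_cancel _ h

lemma res_sub_res {z : ℂ} {A B : E →L[ℂ] E}
    (hA : IsUnit (algebraMap ℂ (E →L[ℂ] E) z - A))
    (hB : IsUnit (algebraMap ℂ (E →L[ℂ] E) z - B)) :
    res z A - res z B = res z A * (A - B) * res z B := by
  have : A - B = (algebraMap ℂ (E →L[ℂ] E) z - B) - (algebraMap ℂ (E →L[ℂ] E) z - A) := by abel
  rw [this, mul_sub, sub_mul, mul_assoc, mul_res_cancel hB, mul_one, res_mul_cancel hA, one_mul]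

lemma res_comm {z : ℂ} (j : E →L[ℂ] F) {A : E →L[ℂ] E} {B : F →L[ℂ] F}
    (h : j ∘L A = B ∘L j)
    (hA : IsUnit (algebraMap ℂ (E →L[ℂ] E) z - A))
    (hB : IsUnit (algebraMap ℂ (F →L[ℂ] F) z - B)) (x : E) :
    j (res z A x) = res z B (j x) := by
  have key : ∀ y : E, j ((algebraMap ℂ (E →L[ℂ] E) z - A) y) =
      (algebraMap ℂ (F →L[ℂ] F) z - B) (j y) := by
    intro y
    have := DFunLike.congr_fun h y
    simp only [ContinuousLinearMap.comp_apply] at this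
    simp [Algebra.algebraMap_eq_smul_one, this]
  have h1 := key (res z A x)
  have h2 : (algebraMap ℂ (E →L[ℂ] E) z - A) (res z A x) = x := by
    have := DFunLike.congr_fun (mul_res_cancel hA) x
    simpa [ContinuousLinearMap.mul_apply] using this
  rw [h2] at h1
  have h3 := congrArg (res z B) h1
  have h4 : ∀ w : F, res z B ((algebraMap ℂ (F →L[ℂ] F) z - B) w) = w := by
    intro w
    have := DFunLike.congr_fun (res_mul_cancel hB) w
    simpa [ContinuousLinearMap.mul_apply] using this
  rw [h4] at h3
  exact h3.symm

lemma continuousOn_res {A : E →L[ℂ] E} {S : Set ℂ}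
    (h : ∀ z ∈ S, IsUnit (algebraMap ℂ (E →L[ℂ] E) z - A)) :
    ContinuousOn (fun z => res z A) S := by
  intro z hzS
  apply ContinuousAt.continuousWithinAt
  obtain ⟨u, hu⟩ := h z hzS
  have h1 : Continuous fun w : ℂ => algebraMap ℂ (E →L[ℂ] E) w - A :=
    (continuous_algebraMap ℂ (E →L[ℂ] E)).sub continuous_const
  have h2 : ContinuousAt Ring.inverse (algebraMap ℂ (E →L[ℂ] E) z - A) := by
    rw [← hu]; exact NormedRing.inverse_continuousAt u
  have h3 : ContinuousAt (fun w : ℂ => algebraMap ℂ (E →L[ℂ] E) w - A) z := h1.continuousAt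
  have he : (fun w : ℂ => res w A) =
      Ring.inverse ∘ (fun w : ℂ => algebraMap ℂ (E →L[ℂ] E) w - A) := rfl
  rw [he]
  exact ContinuousAt.comp (g := Ring.inverse)
    (f := fun w : ℂ => algebraMap ℂ (E →L[ℂ] E) w - A) h2 h3

lemma le_biSup_of_compact {S : Set ℂ} (hS : IsCompact S) {f : ℂ → ℝ}
    (hf : ContinuousOn f S) {z : ℂ} (hzS : z ∈ S) :
    f z ≤ ⨆ w ∈ S, f w := by
  obtain ⟨C, hC⟩ := hS.exists_bound_of_continuousOn hf
  have hbdd : BddAbove (Set.range fun w => ⨆ _ : w ∈ S, f w) := by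
    refine ⟨max C 0, ?_⟩
    rintro _ ⟨w, rfl⟩
    show (⨆ _ : w ∈ S, f w) ≤ max C 0
    by_cases hw : w ∈ S
    · rw [ciSup_pos hw]
      exact le_trans (le_trans (le_abs_self _) (hC w hw)) (le_max_left _ _)
    · haveI : IsEmpty (w ∈ S) := ⟨hw⟩
      rw [Real.iSup_of_isEmpty]
      exact le_max_right _ _
  have h0 : (⨆ _ : z ∈ S, f z) = f z := ciSup_pos hzS
  rw [← h0]
  exact le_ciSup hbdd z

end aux

/-- in the nested one-parameter setting (hypotheses (H1)-(H3)), for fixed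
`t ∈ J = (-ε,ε)` and `z` on the circle `γ` of center `1` and radius `(1-η)/2`, the strong
derivative `∂ₜ R_t(z)` exists as an operator `B₂ → B₀` and equals
`R_t(z) ∘ (∂ₜ L_t) ∘ R_t(z)`. -/
theorem stmt7
    {B₀ B₁ B₂ : Type*}
    [NormedAddCommGroup B₀] [NormedSpace ℂ B₀] [CompleteSpace B₀]
    [NormedAddCommGroup B₁] [NormedSpace ℂ B₁] [CompleteSpace B₁]
    [NormedAddCommGroup B₂] [NormedSpace ℂ B₂] [CompleteSpace B₂]
    (j₀ : B₁ →L[ℂ] B₀) (j₁ : B₂ →L[ℂ] B₁)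
    (hj₀ : Function.Injective j₀) (hj₁ : Function.Injective j₁)
    (ε : ℝ) (hε : 0 < ε)
    (L₀ : ℝ → B₀ →L[ℂ] B₀) (L₁ : ℝ → B₁ →L[ℂ] B₁) (L₂ : ℝ → B₂ →L[ℂ] B₂)
    (hcomp₀ : ∀ t ∈ Set.Ioo (-ε) ε, j₀ ∘L L₁ t = L₀ t ∘L j₀)
    (hcomp₁ : ∀ t ∈ Set.Ioo (-ε) ε, j₁ ∘L L₂ t = L₁ t ∘L j₁)
    (η : ℝ) (hη : η ∈ Set.Ioo (0 : ℝ) 1)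
    (P₁ N₁ : ℝ → B₁ →L[ℂ] B₁) (P₂ N₂ : ℝ → B₂ →L[ℂ] B₂)
    -- (H1): (1,η)-gap decompositions on B₁ and B₂, compatible with the embedding
    (hgap₁ : ∀ t ∈ Set.Ioo (-ε) ε,
      P₁ t * P₁ t = P₁ t ∧ L₁ t * P₁ t = P₁ t ∧ P₁ t * L₁ t = P₁ t ∧
      P₁ t * N₁ t = 0 ∧ N₁ t * P₁ t = 0 ∧ L₁ t = P₁ t + N₁ t ∧
      spectralRadius ℂ (N₁ t) ≤ ENNReal.ofReal η)
    (hgap₂ : ∀ t ∈ Set.Ioo (-ε) ε,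
      P₂ t * P₂ t = P₂ t ∧ L₂ t * P₂ t = P₂ t ∧ P₂ t * L₂ t = P₂ t ∧
      P₂ t * N₂ t = 0 ∧ N₂ t * P₂ t = 0 ∧ L₂ t = P₂ t + N₂ t ∧
      spectralRadius ℂ (N₂ t) ≤ ENNReal.ofReal η)
    (hPcomp : ∀ t ∈ Set.Ioo (-ε) ε, j₁ ∘L P₂ t = P₁ t ∘L j₁)
    -- (H2): strong derivative D t = ∂ₜ L_t as a bounded operator B₂ → B₁
    (D : ℝ → B₂ →L[ℂ] B₁)
    (hH2 : ∀ t ∈ Set.Ioo (-ε) ε, ∀ φ : B₂,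
      Tendsto (fun s : ℝ => (s - t)⁻¹ • (j₁ (L₂ s φ) - j₁ (L₂ t φ)))
        (𝓝[Set.Ioo (-ε) ε \ {t}] t) (𝓝 (D t φ)))
    -- (H3): uniform continuity of the resolvent on γ, as operators B₁ → B₀
    (hH3 : ∀ t ∈ Set.Ioo (-ε) ε,
      Tendsto (fun s : ℝ => ⨆ z ∈ sphere (1 : ℂ) ((1 - η) / 2),
          ‖j₀ ∘L (res z (L₁ s) - res z (L₁ t))‖)
        (𝓝[Set.Ioo (-ε) ε] t) (𝓝 0))
    (t : ℝ) (ht : t ∈ Set.Ioo (-ε) ε)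
    (z : ℂ) (hz : z ∈ sphere (1 : ℂ) ((1 - η) / 2)) :
    ∀ φ : B₂,
      Tendsto
        (fun s : ℝ => (s - t)⁻¹ •
          (j₀ (j₁ (res z (L₂ s) φ)) - j₀ (j₁ (res z (L₂ t) φ))))
        (𝓝[Set.Ioo (-ε) ε \ {t}] t)
        (𝓝 (j₀ (res z (L₁ t) (D t (res z (L₂ t) φ))))) := by
  intro φ
  have sph := sphere (1 : ℂ) ((1 - η) / 2)
  have hu₂ : ∀ s ∈ Set.Ioo (-ε) ε, ∀ w ∈ sphere (1 : ℂ) ((1 - η) / 2),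
      IsUnit (algebraMap ℂ (B₂ →L[ℂ] B₂) w - L₂ s) :=
    fun s hs w hw => isUnit_sub_gap w η hη hw _ _ _ (hgap₂ s hs)
  have hu₁ : ∀ s ∈ Set.Ioo (-ε) ε, ∀ w ∈ sphere (1 : ℂ) ((1 - η) / 2),
      IsUnit (algebraMap ℂ (B₁ →L[ℂ] B₁) w - L₁ s) :=
    fun s hs w hw => isUnit_sub_gap w η hη hw _ _ _ (hgap₁ s hs)
  set ψ : B₂ := res z (L₂ t) φ with hψdef
  set v : ℝ → B₁ := fun s => (s - t)⁻¹ • (j₁ (L₂ s ψ) - j₁ (L₂ t ψ)) with hvdef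
  have hv : Tendsto v (𝓝[Set.Ioo (-ε) ε \ {t}] t) (𝓝 (D t ψ)) := hH2 t ht ψ
  -- pointwise identity on the interval
  have hkey : ∀ s ∈ Set.Ioo (-ε) ε,
      (s - t)⁻¹ • (j₀ (j₁ (res z (L₂ s) φ)) - j₀ (j₁ (res z (L₂ t) φ)))
        = j₀ (res z (L₁ t) (v s)) + (j₀ ∘L (res z (L₁ s) - res z (L₁ t))) (v s) := by
    intro s hs
    have hus := hu₂ s hs z hz
    have hut := hu₂ t ht z hz
    have hus1 := hu₁ s hs z hz
    have hut1 := hu₁ t ht z hz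
    have e1 : res z (L₂ s) φ - res z (L₂ t) φ = res z (L₂ s) (L₂ s ψ - L₂ t ψ) := by
      have h := DFunLike.congr_fun (res_sub_res hus hut) φ
      simpa [ContinuousLinearMap.mul_apply, hψdef] using h
    have e2 : j₁ (res z (L₂ s) (L₂ s ψ - L₂ t ψ))
        = res z (L₁ s) (j₁ (L₂ s ψ) - j₁ (L₂ t ψ)) := by
      rw [res_comm j₁ (hcomp₁ s hs) hus hus1]
      simp
    calc (s - t)⁻¹ • (j₀ (j₁ (res z (L₂ s) φ)) - j₀ (j₁ (res z (L₂ t) φ)))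
        = (s - t)⁻¹ • (j₀ (j₁ (res z (L₂ s) φ - res z (L₂ t) φ))) := by
          rw [map_sub, map_sub]
      _ = (s - t)⁻¹ • (j₀ (res z (L₁ s) (j₁ (L₂ s ψ) - j₁ (L₂ t ψ)))) := by
          rw [e1, e2]
      _ = j₀ (res z (L₁ s) (v s)) := by
          rw [hvdef]
          simp only [map_smul_of_tower]
      _ = j₀ (res z (L₁ t) (v s)) + (j₀ ∘L (res z (L₁ s) - res z (L₁ t))) (v s) := by
          simp only [ContinuousLinearMap.comp_apply, ContinuousLinearMap.sub_apply]
          rw [← map_add]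
          congr 1
          abel
  -- limit of the first term
  have termA : Tendsto (fun s => j₀ (res z (L₁ t) (v s)))
      (𝓝[Set.Ioo (-ε) ε \ {t}] t) (𝓝 (j₀ (res z (L₁ t) (D t ψ)))) := by
    have hc : Continuous fun x : B₁ => j₀ (res z (L₁ t) x) :=
      j₀.continuous.comp (res z (L₁ t)).continuous
    exact (hc.tendsto (D t ψ)).comp hv
  -- the operator-norm term tends to 0
  have hg : Tendsto (fun s => ‖j₀ ∘L (res z (L₁ s) - res z (L₁ t))‖)
      (𝓝[Set.Ioo (-ε) ε \ {t}] t) (𝓝 0) := by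
    have hG : Tendsto (fun s : ℝ => ⨆ w ∈ sphere (1 : ℂ) ((1 - η) / 2),
        ‖j₀ ∘L (res w (L₁ s) - res w (L₁ t))‖)
        (𝓝[Set.Ioo (-ε) ε \ {t}] t) (𝓝 0) :=
      (hH3 t ht).mono_left (nhdsWithin_mono t Set.diff_subset)
    refine squeeze_zero' (Eventually.of_forall fun s => norm_nonneg _) ?_ hG
    filter_upwards [self_mem_nhdsWithin] with s hs
    have hsJ : s ∈ Set.Ioo (-ε) ε := hs.1
    have hcont : ContinuousOn (fun w => ‖j₀ ∘L (res w (L₁ s) - res w (L₁ t))‖)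
        (sphere (1 : ℂ) ((1 - η) / 2)) := by
      have h1 : ContinuousOn (fun w => res w (L₁ s) - res w (L₁ t))
          (sphere (1 : ℂ) ((1 - η) / 2)) :=
        (continuousOn_res (hu₁ s hsJ)).sub (continuousOn_res (hu₁ t ht))
      have h2 : Continuous fun X : B₁ →L[ℂ] B₁ => j₀ ∘L X :=
        (ContinuousLinearMap.compL ℂ B₁ B₁ B₀ j₀).continuous
      exact (h2.comp_continuousOn h1).norm
    exact le_biSup_of_compact (isCompact_sphere _ _) hcont hz
  have termB : Tendsto (fun s => (j₀ ∘L (res z (L₁ s) - res z (L₁ t))) (v s))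
      (𝓝[Set.Ioo (-ε) ε \ {t}] t) (𝓝 0) := by
    have hbound : ∀ s, ‖(j₀ ∘L (res z (L₁ s) - res z (L₁ t))) (v s)‖
        ≤ ‖j₀ ∘L (res z (L₁ s) - res z (L₁ t))‖ * ‖v s‖ :=
      fun s => le_opNorm _ _
    have hlim : Tendsto (fun s => ‖j₀ ∘L (res z (L₁ s) - res z (L₁ t))‖ * ‖v s‖)
        (𝓝[Set.Ioo (-ε) ε \ {t}] t) (𝓝 0) := by
      have := hg.mul hv.norm
      simpa using this
    exact squeeze_zero_norm hbound hlim
  have hfinal := termA.add termB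
  rw [add_zero] at hfinal
  refine hfinal.congr' ?_
  filter_upwards [self_mem_nhdsWithin] with s hs
  exact (hkey s hs.1).symm
end

section
/- In the nested one-parameter setting, for every t ∈ J one has P_t^{(1)} ∘ D_t ∘ P_t^{(2)} = 0 as a bounded linear operator from B₂ to B₁; that is, the spectral projection composed on both sides of the strong derivative of the operator family vanishes: P_t (∂_t L_t) P_t = 0. -/
open ContinuousLinearMap Filter Topology Metric

/-!
Fix `ψ = P_t φ`, so that `L_t ψ = ψ`. Since `P_s L_s = P_s`, the projection `P_s` annihilates the
difference quotient `(s - t)⁻¹ (L_s ψ - L_t ψ)`, hence `P_t` applied to it equals `(P_t - P_s)`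
applied to it. The quotients converge to `D_t ψ`, so it suffices that `j₀ ∘ P_s → j₀ ∘ P_t` in norm;
this follows from (H3) because `P_s = (2πi)⁻¹ ∮_γ R_s(z) dz`, as one checks on the explicit resolvent
`(z - L_s)⁻¹ = (z - 1)⁻¹ P_s + (z - N_s)⁻¹ (1 - P_s)`, whose second term is holomorphic inside `γ`.
Injectivity of `j₀` then gives `P_t D_t ψ = 0`.
-/

theorem Commute.ringInverse_right {M₀ : Type*} [MonoidWithZero M₀] {a b : M₀}
    (h : Commute a b) : Commute a (Ring.inverse b) := by
  by_cases hb : IsUnit b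
  · obtain ⟨u, rfl⟩ := hb
    rw [Ring.inverse_unit]
    exact h.units_inv_right
  · rw [Ring.inverse_non_unit _ hb]
    exact Commute.zero_right a

section RieszProjection

variable {A : Type*} [NormedRing A] [NormedAlgebra ℂ A] {P N : A} {z : ℂ} {r : ℝ}

def IsRieszProjection (r : ℝ) (L P : A) : Prop :=
  ContinuousOn (fun z ↦ Ring.inverse (algebraMap ℂ A z - L)) (sphere 1 r) ∧
    (∮ z in C(1, r), Ring.inverse (algebraMap ℂ A z - L)) = (2 * Real.pi * Complex.I : ℂ) • P

theorem inverse_algebraMap_sub_add_eq (hPP : P * P = P) (hPN : P * N = 0) (hNP : N * P = 0)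
    (hz1 : z ≠ 1) (hz : z ∈ resolventSet ℂ N) :
    Ring.inverse (algebraMap ℂ A z - (P + N)) = (z - 1)⁻¹ • P + resolvent N z * (1 - P) := by
  set R := resolvent N z
  have hPN' : Commute P N := hPN.trans hNP.symm
  have hPR : Commute P R :=
    ((Algebra.commute_algebraMap_right z P).sub_right hPN').ringInverse_right
  have hNR : Commute N R :=
    ((Algebra.commute_algebraMap_right z N).sub_right (Commute.refl N)).ringInverse_right
  have hR : (algebraMap ℂ A z - N) * R = 1 := Ring.mul_inverse_cancel _ hz
  have hzP : algebraMap ℂ A z * P = z • P := by rw [Algebra.smul_def]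
  have hcomm : Commute (algebraMap ℂ A z - (P + N)) ((z - 1)⁻¹ • P + R * (1 - P)) := by
    have hP : Commute (algebraMap ℂ A z - (P + N)) P :=
      (Algebra.commute_algebraMap_left z P).sub_left ((Commute.refl P).add_left hPN'.symm)
    have hR' : Commute (algebraMap ℂ A z - (P + N)) R :=
      (Algebra.commute_algebraMap_left z R).sub_left (hPR.add_left hNR)
    exact (hP.smul_right _).add_right (hR'.mul_right ((Commute.one_right _).sub_right hP))
  have hmul : (algebraMap ℂ A z - (P + N)) * ((z - 1)⁻¹ • P + R * (1 - P)) = 1 := by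
    have h₁ : (algebraMap ℂ A z - (P + N)) * P = (z - 1) • P := by
      rw [sub_mul, add_mul, hzP, hPP, hNP, add_zero, sub_smul, one_smul]
    have h₂ : (algebraMap ℂ A z - (P + N)) * R = 1 - R * P := by
      rw [show algebraMap ℂ A z - (P + N) = (algebraMap ℂ A z - N) - P by abel, sub_mul, hR,
        hPR.eq]
    rw [mul_add, mul_smul_comm, h₁, smul_smul, inv_mul_cancel₀ (sub_ne_zero.mpr hz1), one_smul,
      ← mul_assoc, h₂, sub_mul, one_mul, mul_assoc, mul_sub, mul_one, hPP, sub_self, mul_zero,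
      sub_zero, add_sub_cancel]
  exact Ring.inverse_unit ⟨_, _, hmul, hcomm.eq ▸ hmul⟩

theorem closedBall_one_subset_resolventSet [CompleteSpace A] {η : ℝ} (hη : 0 ≤ η)
    (hN : spectralRadius ℂ N ≤ ENNReal.ofReal η) (hr : r < 1 - η) :
    closedBall (1 : ℂ) r ⊆ resolventSet ℂ N := by
  intro z hz
  apply spectrum.mem_resolventSet_of_spectralRadius_lt
  have hηz : η < ‖z‖ := by
    have := norm_sub_norm_le (1 : ℂ) z
    rw [norm_one, norm_sub_rev, ← dist_eq_norm] at this
    linarith [mem_closedBall.mp hz]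
  calc spectralRadius ℂ N ≤ ENNReal.ofReal η := hN
    _ < ENNReal.ofReal ‖z‖ := (ENNReal.ofReal_lt_ofReal_iff (hη.trans_lt hηz)).mpr hηz
    _ = ‖z‖₊ := by rw [ofReal_norm, enorm_eq_nnnorm]

theorem eqOn_inverse_algebraMap_sub_add (hPP : P * P = P) (hPN : P * N = 0) (hNP : N * P = 0)
    (hr : 0 < r) (hN : closedBall (1 : ℂ) r ⊆ resolventSet ℂ N) :
    Set.EqOn (fun z ↦ Ring.inverse (algebraMap ℂ A z - (P + N)))
      (fun z ↦ (z - 1)⁻¹ • P + resolvent N z * (1 - P)) (sphere 1 r) := fun _ hz ↦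
  inverse_algebraMap_sub_add_eq hPP hPN hNP (ne_of_mem_sphere hz hr.ne')
    (hN (sphere_subset_closedBall hz))

theorem continuousOn_sub_one_inv_smul (hr : 0 < r) (P : A) :
    ContinuousOn (fun z : ℂ ↦ (z - 1)⁻¹ • P) (sphere 1 r) :=
  ((continuousOn_id.sub continuousOn_const).inv₀ fun _ hz ↦
    sub_ne_zero.mpr (ne_of_mem_sphere hz hr.ne')).smul continuousOn_const

variable [CompleteSpace A]

theorem differentiableOn_resolvent_s9 (N : A) :
    DifferentiableOn ℂ (resolvent N) (resolventSet ℂ N) := fun _ hz ↦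
  (spectrum.hasDerivAt_resolvent_const_left hz).differentiableAt.differentiableWithinAt

theorem isRieszProjection_add (hPP : P * P = P) (hPN : P * N = 0) (hNP : N * P = 0)
    (hr : 0 < r) (hN : closedBall (1 : ℂ) r ⊆ resolventSet ℂ N) :
    IsRieszProjection r (P + N) P := by
  have hdiff : DifferentiableOn ℂ (fun z ↦ resolvent N z * (1 - P)) (closedBall (1 : ℂ) r) :=
    ((differentiableOn_resolvent_s9 N).mono hN).mul_const _
  have hcont :
      ContinuousOn (fun z : ℂ ↦ (z - 1)⁻¹ • P + resolvent N z * (1 - P)) (sphere 1 r) :=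
    (continuousOn_sub_one_inv_smul hr P).add (hdiff.continuousOn.mono sphere_subset_closedBall)
  have hzero : (∮ z in C(1, r), resolvent N z * (1 - P)) = 0 :=
    DiffContOnCl.circleIntegral_eq_zero hr.le
      (DifferentiableOn.diffContOnCl (by rwa [closure_ball _ hr.ne']))
  have hEq := eqOn_inverse_algebraMap_sub_add hPP hPN hNP hr hN
  refine ⟨hcont.congr hEq, ?_⟩
  rw [circleIntegral.integral_congr hr.le hEq,
    circleIntegral.integral_add ((continuousOn_sub_one_inv_smul hr P).circleIntegrable hr.le)
      ((hdiff.continuousOn.mono sphere_subset_closedBall).circleIntegrable hr.le),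
    circleIntegral.integral_smul_const,
    circleIntegral.integral_sub_inv_of_mem_ball (mem_ball_self hr), hzero, add_zero]

end RieszProjection

theorem IsCompact.le_biSup {α β : Type*} [TopologicalSpace α] [ConditionallyCompleteLinearOrder β]
    [TopologicalSpace β] [OrderTopology β] {s : Set α} (hs : IsCompact s) {g : α → β}
    (hg : ContinuousOn g s) {x : α} (hx : x ∈ s) : g x ≤ ⨆ y ∈ s, g y :=
  le_ciSup₂ (f := fun y (_ : y ∈ s) ↦ g y) ((hs.bddAbove_image hg).mono <| by
    rintro _ ⟨_, ⟨y, rfl⟩, ⟨hy, rfl⟩⟩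
    exact ⟨y, hy, rfl⟩) x hx

section CircleIntegral

variable {E F : Type*} [NormedAddCommGroup E] [NormedSpace ℂ E] [CompleteSpace E]
  [NormedAddCommGroup F] [NormedSpace ℂ F] [CompleteSpace F]

theorem ContinuousLinearMap.map_circleIntegral (Φ : E →L[ℂ] F) {f : ℂ → E} {c : ℂ} {r : ℝ}
    (hf : CircleIntegrable f c r) : Φ (∮ z in C(c, r), f z) = ∮ z in C(c, r), Φ (f z) := by
  simp only [circleIntegral, ← Φ.intervalIntegral_comp_comm hf.out, map_smul]

theorem norm_map_sub_le_of_circleIntegral_eq (Φ : E →L[ℂ] F) {f g : ℂ → E} {p q : E} {c : ℂ}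
    {r : ℝ} (hr : 0 ≤ r) (hf : ContinuousOn f (sphere c r)) (hg : ContinuousOn g (sphere c r))
    (hfp : (∮ z in C(c, r), f z) = (2 * Real.pi * Complex.I : ℂ) • p)
    (hgq : (∮ z in C(c, r), g z) = (2 * Real.pi * Complex.I : ℂ) • q) :
    ‖Φ (p - q)‖ ≤ r * ⨆ z ∈ sphere c r, ‖Φ (f z - g z)‖ := by
  have hcont : ContinuousOn (fun z ↦ ‖Φ (f z - g z)‖) (sphere c r) :=
    (Φ.continuous.comp_continuousOn (hf.sub hg)).norm
  have hint : (2 * Real.pi * Complex.I : ℂ)⁻¹ • (∮ z in C(c, r), Φ (f z - g z)) = Φ (p - q) := by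
    rw [← Φ.map_circleIntegral (f := fun z ↦ f z - g z) ((hf.sub hg).circleIntegrable hr),
      circleIntegral.integral_sub (hf.circleIntegrable hr) (hg.circleIntegrable hr), hfp, hgq,
      ← smul_sub, map_smul, inv_smul_smul₀ (by simp [Real.pi_ne_zero])]
  rw [← hint]
  exact circleIntegral.norm_two_pi_i_inv_smul_integral_le_of_norm_le_const hr fun z hz ↦
    (isCompact_sphere c r).le_biSup hcont hz

theorem IsRieszProjection.norm_comp_sub_le {L L' P P' : E →L[ℂ] E} {r : ℝ} (hr : 0 ≤ r)
    (h : IsRieszProjection r L P) (h' : IsRieszProjection r L' P') (j : E →L[ℂ] F) :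
    ‖j ∘L (P - P')‖ ≤ r * ⨆ z ∈ sphere (1 : ℂ) r, ‖j ∘L (res z L - res z L')‖ := by
  simpa only [compL_apply, res] using
    norm_map_sub_le_of_circleIntegral_eq (compL ℂ E E F j) hr h.1 h'.1 h.2 h'.2

end CircleIntegral

theorem apply_eq_zero_of_tendsto {𝕜 E F G ι : Type*} [NontriviallyNormedField 𝕜]
    [NormedAddCommGroup E] [NormedSpace 𝕜 E] [NormedAddCommGroup F] [NormedSpace 𝕜 F]
    [NormedAddCommGroup G] [NormedSpace 𝕜 G] {l : Filter ι} [l.NeBot] {j : G →L[𝕜] F}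
    (hj : Function.Injective j) {Q : ι → E →L[𝕜] G} {Q₀ : E →L[𝕜] G} {y : ι → E} {d : E}
    (hQ : Tendsto (fun i ↦ ‖j ∘L (Q i - Q₀)‖) l (𝓝 0)) (hy : Tendsto y l (𝓝 d))
    (hQy : ∀ᶠ i in l, Q i (y i) = 0) : Q₀ d = 0 := by
  have hlim : Tendsto (fun i ↦ j (Q₀ (y i))) l (𝓝 (j (Q₀ d))) :=
    ((j.comp Q₀).continuous.tendsto d).comp hy
  have hzero : Tendsto (fun i ↦ j (Q₀ (y i))) l (𝓝 0) := by
    refine squeeze_zero_norm' (a := fun i ↦ ‖j ∘L (Q i - Q₀)‖ * ‖y i‖) ?_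
      (by simpa using hQ.mul hy.norm)
    filter_upwards [hQy] with i hi
    calc ‖j (Q₀ (y i))‖ = ‖(j ∘L (Q i - Q₀)) (y i)‖ := by simp [hi]
      _ ≤ ‖j ∘L (Q i - Q₀)‖ * ‖y i‖ := le_opNorm _ _
  exact hj (by rw [tendsto_nhds_unique hlim hzero, map_zero])

theorem stmt9_general
    {B₀ B₁ B₂ : Type*}
    [NormedAddCommGroup B₀] [NormedSpace ℂ B₀] [CompleteSpace B₀]
    [NormedAddCommGroup B₁] [NormedSpace ℂ B₁] [CompleteSpace B₁]
    [NormedAddCommGroup B₂] [NormedSpace ℂ B₂]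
    (j₀ : B₁ →L[ℂ] B₀) (j₁ : B₂ →L[ℂ] B₁)
    (hj₀ : Function.Injective j₀)
    (ε : ℝ)
    (L₁ : ℝ → B₁ →L[ℂ] B₁) (L₂ : ℝ → B₂ →L[ℂ] B₂)
    (hcomp₁ : ∀ t ∈ Set.Ioo (-ε) ε, j₁ ∘L L₂ t = L₁ t ∘L j₁)
    (η : ℝ) (hη : η ∈ Set.Ioo (0 : ℝ) 1)
    (P₁ N₁ : ℝ → B₁ →L[ℂ] B₁) (P₂ N₂ : ℝ → B₂ →L[ℂ] B₂)
    -- (H1): (1,η)-gap decompositions on B₁ and B₂, compatible with the embedding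
    (hgap₁ : ∀ t ∈ Set.Ioo (-ε) ε,
      P₁ t * P₁ t = P₁ t ∧ L₁ t * P₁ t = P₁ t ∧ P₁ t * L₁ t = P₁ t ∧
      P₁ t * N₁ t = 0 ∧ N₁ t * P₁ t = 0 ∧ L₁ t = P₁ t + N₁ t ∧
      spectralRadius ℂ (N₁ t) ≤ ENNReal.ofReal η)
    (hgap₂ : ∀ t ∈ Set.Ioo (-ε) ε,
      P₂ t * P₂ t = P₂ t ∧ L₂ t * P₂ t = P₂ t ∧ P₂ t * L₂ t = P₂ t ∧
      P₂ t * N₂ t = 0 ∧ N₂ t * P₂ t = 0 ∧ L₂ t = P₂ t + N₂ t ∧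
      spectralRadius ℂ (N₂ t) ≤ ENNReal.ofReal η)
    -- (H2): strong derivative D t = ∂ₜ L_t as a bounded operator B₂ → B₁
    (D : ℝ → B₂ →L[ℂ] B₁)
    (hH2 : ∀ t ∈ Set.Ioo (-ε) ε, ∀ φ : B₂,
      Tendsto (fun s : ℝ => (s - t)⁻¹ • (j₁ (L₂ s φ) - j₁ (L₂ t φ)))
        (𝓝[Set.Ioo (-ε) ε \ {t}] t) (𝓝 (D t φ)))
    -- (H3): uniform continuity of the resolvent on γ, as operators B₁ → B₀
    (hH3 : ∀ t ∈ Set.Ioo (-ε) ε,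
      Tendsto (fun s : ℝ => ⨆ z ∈ sphere (1 : ℂ) ((1 - η) / 2),
          ‖j₀ ∘L (res z (L₁ s) - res z (L₁ t))‖)
        (𝓝[Set.Ioo (-ε) ε] t) (𝓝 0))
    :
    ∀ t ∈ Set.Ioo (-ε) ε, P₁ t ∘L D t ∘L P₂ t = 0 := by
  intro t ht
  have hr : 0 < (1 - η) / 2 := by linarith [hη.2]
  have hRiesz : ∀ s ∈ Set.Ioo (-ε) ε, IsRieszProjection ((1 - η) / 2) (L₁ s) (P₁ s) := by
    intro s hs
    obtain ⟨hPP, -, -, hPN, hNP, hL, hrad⟩ := hgap₁ s hs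
    rw [hL]
    exact isRieszProjection_add hPP hPN hNP hr
      (closedBall_one_subset_resolventSet hη.1.le hrad (by linarith [hη.2]))
  have hP : Tendsto (fun s ↦ ‖j₀ ∘L (P₁ s - P₁ t)‖) (𝓝[Set.Ioo (-ε) ε] t) (𝓝 0) := by
    have hbound := (hH3 t ht).const_mul ((1 - η) / 2)
    rw [mul_zero] at hbound
    refine squeeze_zero' (Eventually.of_forall fun _ ↦ norm_nonneg _) ?_ hbound
    filter_upwards [self_mem_nhdsWithin] with s hs
    exact (hRiesz s hs).norm_comp_sub_le hr.le (hRiesz t ht) j₀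
  have : (𝓝[Set.Ioo (-ε) ε \ {t}] t).NeBot := by
    rw [Set.sdiff_eq, nhdsWithin_inter_of_mem (mem_nhdsWithin_of_mem_nhds (isOpen_Ioo.mem_nhds ht))]
    infer_instance
  refine ContinuousLinearMap.ext fun φ ↦ ?_
  rw [comp_apply, comp_apply, zero_apply]
  have hfix : L₂ t (P₂ t φ) = P₂ t φ := by rw [← mul_apply_eq_comp, (hgap₂ t ht).2.1]
  refine apply_eq_zero_of_tendsto hj₀ (hP.mono_left (nhdsWithin_mono _ Set.sdiff_subset))
    (hH2 t ht (P₂ t φ)) ?_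
  filter_upwards [self_mem_nhdsWithin] with s hs
  have hL : j₁ (L₂ s (P₂ t φ)) = L₁ s (j₁ (P₂ t φ)) := congr($(hcomp₁ s hs.1) (P₂ t φ))
  have hPL : P₁ s (L₁ s (j₁ (P₂ t φ))) = P₁ s (j₁ (P₂ t φ)) :=
    congr($((hgap₁ s hs.1).2.2.1) (j₁ (P₂ t φ)))
  rw [hfix, hL, map_smul_of_tower, map_sub, hPL, sub_self, smul_zero]

/-- in the nested one-parameter setting (hypotheses (H1)-(H3)), for every
`t ∈ J = (-ε,ε)` one has `P_t ∘ (∂ₜ L_t) ∘ P_t = 0` as a bounded operator `B₂ → B₁`. -/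
theorem stmt9
    {B₀ B₁ B₂ : Type*}
    [NormedAddCommGroup B₀] [NormedSpace ℂ B₀] [CompleteSpace B₀]
    [NormedAddCommGroup B₁] [NormedSpace ℂ B₁] [CompleteSpace B₁]
    [NormedAddCommGroup B₂] [NormedSpace ℂ B₂] [CompleteSpace B₂]
    (j₀ : B₁ →L[ℂ] B₀) (j₁ : B₂ →L[ℂ] B₁)
    (hj₀ : Function.Injective j₀) (hj₁ : Function.Injective j₁)
    (ε : ℝ) (hε : 0 < ε)
    (L₀ : ℝ → B₀ →L[ℂ] B₀) (L₁ : ℝ → B₁ →L[ℂ] B₁) (L₂ : ℝ → B₂ →L[ℂ] B₂)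
    (hcomp₀ : ∀ t ∈ Set.Ioo (-ε) ε, j₀ ∘L L₁ t = L₀ t ∘L j₀)
    (hcomp₁ : ∀ t ∈ Set.Ioo (-ε) ε, j₁ ∘L L₂ t = L₁ t ∘L j₁)
    (η : ℝ) (hη : η ∈ Set.Ioo (0 : ℝ) 1)
    (P₁ N₁ : ℝ → B₁ →L[ℂ] B₁) (P₂ N₂ : ℝ → B₂ →L[ℂ] B₂)
    -- (H1): (1,η)-gap decompositions on B₁ and B₂, compatible with the embedding
    (hgap₁ : ∀ t ∈ Set.Ioo (-ε) ε,
      P₁ t * P₁ t = P₁ t ∧ L₁ t * P₁ t = P₁ t ∧ P₁ t * L₁ t = P₁ t ∧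
      P₁ t * N₁ t = 0 ∧ N₁ t * P₁ t = 0 ∧ L₁ t = P₁ t + N₁ t ∧
      spectralRadius ℂ (N₁ t) ≤ ENNReal.ofReal η)
    (hgap₂ : ∀ t ∈ Set.Ioo (-ε) ε,
      P₂ t * P₂ t = P₂ t ∧ L₂ t * P₂ t = P₂ t ∧ P₂ t * L₂ t = P₂ t ∧
      P₂ t * N₂ t = 0 ∧ N₂ t * P₂ t = 0 ∧ L₂ t = P₂ t + N₂ t ∧
      spectralRadius ℂ (N₂ t) ≤ ENNReal.ofReal η)
    (hPcomp : ∀ t ∈ Set.Ioo (-ε) ε, j₁ ∘L P₂ t = P₁ t ∘L j₁)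
    -- (H2): strong derivative D t = ∂ₜ L_t as a bounded operator B₂ → B₁
    (D : ℝ → B₂ →L[ℂ] B₁)
    (hH2 : ∀ t ∈ Set.Ioo (-ε) ε, ∀ φ : B₂,
      Tendsto (fun s : ℝ => (s - t)⁻¹ • (j₁ (L₂ s φ) - j₁ (L₂ t φ)))
        (𝓝[Set.Ioo (-ε) ε \ {t}] t) (𝓝 (D t φ)))
    -- (H3): uniform continuity of the resolvent on γ, as operators B₁ → B₀
    (hH3 : ∀ t ∈ Set.Ioo (-ε) ε,
      Tendsto (fun s : ℝ => ⨆ z ∈ sphere (1 : ℂ) ((1 - η) / 2),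
          ‖j₀ ∘L (res z (L₁ s) - res z (L₁ t))‖)
        (𝓝[Set.Ioo (-ε) ε] t) (𝓝 0))
    :
    ∀ t ∈ Set.Ioo (-ε) ε, P₁ t ∘L D t ∘L P₂ t = 0 :=
  stmt9_general j₀ j₁ hj₀ ε L₁ L₂ hcomp₁ η hη P₁ N₁ P₂ N₂ hgap₁ hgap₂ D hH2 hH3
end
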